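/- Assume hypotheses (H1), (H2) and (H3). Then for every ε ∈ (0,ε₀] there exists an integer N ∈ ℕ (depending only on ε) such that for all x,y ∈ M, all ω ∈ Ω and all n ≥ N, the set F_ω^n(W^u_ε(ω,x)) ∩ W^s_ε(θ^n ω, y) is nonempty. -/

import Mathlib

/-!
Compactness turns fiberwise mixing into a uniform statement: for `n` large, some `z` close to `x`
has `F_ω^n z` close to `y`. Bracketing `z` with `x` gives `w ∈ W^s(z) ∩ W^u(x)`; forward
contraction along `W^s` keeps `F_ω^n w` close to `F_ω^n z`, hence to `y`, and bracketing `y` with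
`F_ω^n w` gives a point of `W^s(θ^n ω, y)` whose backward orbit shadows that of `F_ω^n w`, so
that it lies in `F_ω^n (W^u(ω, x))` with the two `ε/2`'s adding up to `ε`.
-/

open Set Filter Topology MeasureTheory ENNReal NNReal

noncomputable section

namespace Paper

variable {Ω M : Type*} [MetricSpace Ω] [MetricSpace M]

/-- Fiber forward iterates `F_ω^n = F_{θ^{n-1}ω} ∘ ⋯ ∘ F_ω` as homeomorphisms. -/
def fIterH (θ : Ω ≃ₜ Ω) (F : Ω → M ≃ₜ M) (ω : Ω) : ℕ → (M ≃ₜ M)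
  | 0 => Homeomorph.refl M
  | n + 1 => (fIterH θ F ω n).trans (F ((⇑θ)^[n] ω))

/-- Fiber iterates `F_ω^t` for `t ∈ ℤ`, with `F_ω^{-n} = (F_{θ^{-n}ω}^n)⁻¹`. -/
def fIterZ (θ : Ω ≃ₜ Ω) (F : Ω → M ≃ₜ M) (ω : Ω) : ℤ → (M ≃ₜ M)
  | Int.ofNat n => fIterH θ F ω n
  | Int.negSucc n => (fIterH θ F ((⇑θ.symm)^[n + 1] ω) (n + 1)).symm

/-- The iterates `θ^t` of the base homeomorphism, `t ∈ ℤ`. -/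
def thIterZ (θ : Ω ≃ₜ Ω) : ℤ → Ω → Ω
  | Int.ofNat n => (⇑θ)^[n]
  | Int.negSucc n => (⇑θ.symm)^[n + 1]

/-- Local stable set `W^s_ε(ω,x)`. -/
def Ws (θ : Ω ≃ₜ Ω) (F : Ω → M ≃ₜ M) (ε : ℝ) (ω : Ω) (x : M) : Set M :=
  {y | ∀ n : ℕ, dist (fIterH θ F ω n x) (fIterH θ F ω n y) ≤ ε}

/-- Local unstable set `W^u_ε(ω,x)`. -/
def Wu (θ : Ω ≃ₜ Ω) (F : Ω → M ≃ₜ M) (ε : ℝ) (ω : Ω) (x : M) : Set M :=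
  {y | ∀ n : ℕ, dist (fIterZ θ F ω (-(n : ℤ)) x) (fIterZ θ F ω (-(n : ℤ)) y) ≤ ε}

lemma fIterH_add (θ : Ω ≃ₜ Ω) (F : Ω → M ≃ₜ M) (ω : Ω) (a b : ℕ) :
    fIterH θ F ω (a + b) = (fIterH θ F ω a).trans (fIterH θ F ((⇑θ)^[a] ω) b) := by
  induction b with
  | zero => rfl
  | succ b ih =>
    ext x
    rw [← Nat.add_assoc, fIterH, ih, fIterH, Nat.add_comm a b, Function.iterate_add_apply]
    rfl

lemma fIterZ_iterate_neg (θ : Ω ≃ₜ Ω) (F : Ω → M ≃ₜ M) (ω : Ω) (n : ℕ) :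
    fIterZ θ F ((⇑θ)^[n] ω) (-(n : ℤ)) = (fIterH θ F ω n).symm := by
  cases n with
  | zero => rfl
  | succ m =>
    change (fIterH θ F ((⇑θ.symm)^[m + 1] ((⇑θ)^[m + 1] ω)) (m + 1)).symm = _
    rw [Function.LeftInverse.iterate θ.symm_apply_apply (m + 1)]

lemma fIterZ_iterate_neg_add_apply (θ : Ω ≃ₜ Ω) (F : Ω → M ≃ₜ M) (ω : Ω) (n m : ℕ) (u : M) :
    fIterZ θ F ((⇑θ)^[n] ω) (-((n + m : ℕ) : ℤ)) u =
      fIterZ θ F ω (-(m : ℤ)) ((fIterH θ F ω n).symm u) := by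
  obtain ⟨ω₀, rfl⟩ := (θ.surjective.iterate m) ω
  rw [← Function.iterate_add_apply, fIterZ_iterate_neg, fIterZ_iterate_neg, Nat.add_comm,
    fIterH_add, Homeomorph.symm_trans_apply]

lemma dist_le_of_mem_Ws {θ : Ω ≃ₜ Ω} {F : Ω → M ≃ₜ M} {ε : ℝ} {ω : Ω} {x y : M}
    (h : y ∈ Ws θ F ε ω x) : dist x y ≤ ε :=
  h 0

lemma Ws_mono {θ : Ω ≃ₜ Ω} {F : Ω → M ≃ₜ M} {ε ε' : ℝ} (hε : ε ≤ ε') (ω : Ω) (x : M) :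
    Ws θ F ε ω x ⊆ Ws θ F ε' ω x :=
  fun _ hy n => (hy n).trans hε

lemma mem_Wu_trans {θ : Ω ≃ₜ Ω} {F : Ω → M ≃ₜ M} {a b : ℝ} {ω : Ω} {x w u : M}
    (hw : w ∈ Wu θ F a ω x) (hu : u ∈ Wu θ F b ω w) : u ∈ Wu θ F (a + b) ω x :=
  fun n => (dist_triangle _ _ _).trans (add_le_add (hw n) (hu n))

lemma symm_fIterH_mem_Wu {θ : Ω ≃ₜ Ω} {F : Ω → M ≃ₜ M} {ε : ℝ} {ω : Ω} {n : ℕ} {w v : M}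
    (hv : v ∈ Wu θ F ε ((⇑θ)^[n] ω) (fIterH θ F ω n w)) :
    (fIterH θ F ω n).symm v ∈ Wu θ F ε ω w := by
  intro m
  have h := hv (n + m)
  rwa [fIterZ_iterate_neg_add_apply, fIterZ_iterate_neg_add_apply,
    Homeomorph.symm_apply_apply] at h

omit [MetricSpace Ω] in
lemma eventually_exists_near_of_mixing {ι : Type*} [CompactSpace M] {Φ : ℕ → ι → M → M}
    (hmix : ∀ U V : Set M, IsOpen U → IsOpen V → U.Nonempty → V.Nonempty →
      ∃ N : ℕ, ∀ n : ℕ, N ≤ n → ∀ i : ι, (Φ n i '' U ∩ V).Nonempty)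
    {r : ℝ} (hr : 0 < r) :
    ∀ᶠ n in atTop, ∀ (i : ι) (x y : M), ∃ z, dist z x < r ∧ dist (Φ n i z) y < r := by
  have hr₂ : 0 < r / 2 := half_pos hr
  obtain ⟨t, -, ht, hcover⟩ := finite_cover_balls_of_compact (isCompact_univ (X := M)) hr₂
  have hpairs : ∀ᶠ n in atTop, ∀ pq ∈ t ×ˢ t, ∀ i,
      (Φ n i '' Metric.ball pq.1 (r / 2) ∩ Metric.ball pq.2 (r / 2)).Nonempty :=
    (ht.prod ht).eventually_all.2 fun _ _ => eventually_atTop.2 <|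
      hmix _ _ Metric.isOpen_ball Metric.isOpen_ball (Metric.nonempty_ball.2 hr₂)
        (Metric.nonempty_ball.2 hr₂)
  filter_upwards [hpairs] with n hn i x y
  obtain ⟨p, hp, hxp⟩ := mem_iUnion₂.1 (hcover (mem_univ x))
  obtain ⟨q, hq, hyq⟩ := mem_iUnion₂.1 (hcover (mem_univ y))
  obtain ⟨_, ⟨z, hzp, rfl⟩, hzq⟩ := hn (p, q) ⟨hp, hq⟩ i
  rw [Metric.mem_ball] at hxp hyq hzp hzq
  exact ⟨z, by linarith [dist_triangle_right z x p],
    by linarith [dist_triangle_right (Φ n i z) y q]⟩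

lemma eventually_exp_neg_mul_mul_lt {lam : ℝ} (hlam : 0 < lam) (c : ℝ) {d : ℝ} (hd : 0 < d) :
    ∀ᶠ n : ℕ in atTop, Real.exp (-(n : ℝ) * lam) * c < d := by
  have h : Tendsto (fun n : ℕ => Real.exp (-(n : ℝ) * lam) * c) atTop (𝓝 0) := by
    simpa [neg_mul] using (Real.tendsto_exp_atBot.comp (tendsto_neg_atTop_atBot.comp
      (tendsto_natCast_atTop_atTop.atTop_mul_const hlam))).mul_const c
  exact h.eventually_lt_const hd

theorem unstable_hits_stable_general
    [CompactSpace M]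
    (θ : Ω ≃ₜ Ω) (F : Ω → M ≃ₜ M)
    (ε₀ lam : ℝ) (hlam : 0 < lam)
    -- (H1), stable part
    (H1s : ∀ ε : ℝ, 0 < ε → ε ≤ ε₀ → ∀ (ω : Ω) (x y : M), y ∈ Ws θ F ε ω x →
      ∀ n : ℕ, dist (fIterH θ F ω n x) (fIterH θ F ω n y) ≤
        Real.exp (-(n : ℝ) * lam) * dist x y)
    -- (H2), local product structure
    (H2 : ∀ ε : ℝ, 0 < ε → ε ≤ ε₀ → ∃ δ : ℝ, 0 < δ ∧ δ < ε ∧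
      ∀ (ω : Ω) (x y : M), dist x y < δ → ∃! z : M, z ∈ Ws θ F ε ω x ∩ Wu θ F ε ω y)
    -- (H3), topological mixing on fibers
    (H3 : ∀ U V : Set M, IsOpen U → IsOpen V → U.Nonempty → V.Nonempty →
      ∃ N : ℕ, ∀ n : ℕ, N ≤ n → ∀ ω : Ω,
        ((fun z => fIterH θ F ω n z) '' U ∩ V).Nonempty) :
    ∀ ε : ℝ, 0 < ε → ε ≤ ε₀ → ∃ N : ℕ, ∀ (x y : M) (ω : Ω) (n : ℕ), N ≤ n →
      ((fun z => fIterH θ F ω n z) '' Wu θ F ε ω x ∩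
        Ws θ F ε ((⇑θ)^[n] ω) y).Nonempty := by
  intro ε hε hεε₀
  obtain ⟨δ, hδ, -, bracket⟩ := H2 (ε / 2) (half_pos hε) (by linarith)
  obtain ⟨N, hN⟩ := ((eventually_exists_near_of_mixing H3 (half_pos hδ)).and
    (eventually_exp_neg_mul_mul_lt hlam (ε / 2) (half_pos hδ))).exists_forall_of_atTop
  refine ⟨N, fun x y ω n hn => ?_⟩
  obtain ⟨hnear, hcontract⟩ := hN n hn
  obtain ⟨z, hzx, hzy⟩ := hnear ω x y
  obtain ⟨w, ⟨hwz, hwx⟩, -⟩ := bracket ω z x (by linarith)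
  have hwy : dist y (fIterH θ F ω n w) < δ := by
    have := H1s (ε / 2) (half_pos hε) (by linarith) ω z w hwz n
    have := mul_le_mul_of_nonneg_left (dist_le_of_mem_Ws hwz) (Real.exp_pos (-(n : ℝ) * lam)).le
    linarith [dist_triangle_left y (fIterH θ F ω n w) (fIterH θ F ω n z)]
  obtain ⟨v, ⟨hvy, hvw⟩, -⟩ := bracket ((⇑θ)^[n] ω) y (fIterH θ F ω n w) hwy
  refine ⟨v, ⟨(fIterH θ F ω n).symm v, ?_, (fIterH θ F ω n).apply_symm_apply v⟩,
    Ws_mono (half_le_self hε.le) _ _ hvy⟩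
  rw [← add_halves ε]
  exact mem_Wu_trans hwx (symm_fIterH_mem_Wu hvw)

/-- under (H1),(H2),(H3), for every `ε ∈ (0,ε₀]` there is `N` such that
`F_ω^n(W^u_ε(ω,x)) ∩ W^s_ε(θ^n ω, y) ≠ ∅` for all `x,y ∈ M`, all `ω ∈ Ω`, all `n ≥ N`. -/
theorem unstable_hits_stable
    [CompactSpace Ω] [CompactSpace M]
    (θ : Ω ≃ₜ Ω) (F : Ω → M ≃ₜ M)
    (hF : Continuous fun p : Ω × M => F p.1 p.2)
    (ε₀ lam : ℝ) (hε₀ : 0 < ε₀) (hlam : 0 < lam)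
    -- (H1), stable part
    (H1s : ∀ ε : ℝ, 0 < ε → ε ≤ ε₀ → ∀ (ω : Ω) (x y : M), y ∈ Ws θ F ε ω x →
      ∀ n : ℕ, dist (fIterH θ F ω n x) (fIterH θ F ω n y) ≤
        Real.exp (-(n : ℝ) * lam) * dist x y)
    -- (H1), unstable part
    (H1u : ∀ ε : ℝ, 0 < ε → ε ≤ ε₀ → ∀ (ω : Ω) (x y : M), y ∈ Wu θ F ε ω x →
      ∀ n : ℕ, dist (fIterZ θ F ω (-(n : ℤ)) x) (fIterZ θ F ω (-(n : ℤ)) y) ≤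
        Real.exp (-(n : ℝ) * lam) * dist x y)
    -- (H2), local product structure
    (H2 : ∀ ε : ℝ, 0 < ε → ε ≤ ε₀ → ∃ δ : ℝ, 0 < δ ∧ δ < ε ∧
      ∀ (ω : Ω) (x y : M), dist x y < δ → ∃! z : M, z ∈ Ws θ F ε ω x ∩ Wu θ F ε ω y)
    -- (H3), topological mixing on fibers
    (H3 : ∀ U V : Set M, IsOpen U → IsOpen V → U.Nonempty → V.Nonempty →
      ∃ N : ℕ, ∀ n : ℕ, N ≤ n → ∀ ω : Ω,
        ((fun z => fIterH θ F ω n z) '' U ∩ V).Nonempty) :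
    ∀ ε : ℝ, 0 < ε → ε ≤ ε₀ → ∃ N : ℕ, ∀ (x y : M) (ω : Ω) (n : ℕ), N ≤ n →
      ((fun z => fIterH θ F ω n z) '' Wu θ F ε ω x ∩
        Ws θ F ε ((⇑θ)^[n] ω) y).Nonempty :=
  unstable_hits_stable_general θ F ε₀ lam hlam H1s H2 H3

end Paper
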